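/- arXiv:2109.05459 — 4 statements merged into one kernel-verified Lean document; each statement's English description precedes it below -/
import Mathlib

section
/- Let G be a group, let L be a normal subgroup of G, and let H and K be subgroups of G such that the underlying set of L is contained in the pointwise product of the underlying sets of H and K. Then G = HK if and only if the quotient group G/L equals the product of the images of H and K in G/L (i.e., every element of G/L is a product of an element of the image of H under the quotient map and an element of the image of K under the quotient map). -/
open Pointwise

/-- Lemma 2.2: if `L ⊆ HK` (as sets) with `L` normal, then `G = HK` iff
`G/L = (HL/L)(KL/L)`. -/
theorem stmt_1 {G : Type*} [Group G] (L H K : Subgroup G) [L.Normal]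
    (hL : (L : Set G) ⊆ (H : Set G) * (K : Set G)) :
    (H : Set G) * (K : Set G) = Set.univ ↔
      ((H.map (QuotientGroup.mk' L) : Set (G ⧸ L)) *
        (K.map (QuotientGroup.mk' L) : Set (G ⧸ L)) = Set.univ) := by
  constructor
  · intro hG
    ext x
    simp only [Set.mem_univ, iff_true]
    obtain ⟨g, rfl⟩ := QuotientGroup.mk'_surjective L x
    obtain ⟨h, hh, k, hk, rfl⟩ := hG.ge (Set.mem_univ g)
    exact ⟨_, ⟨h, hh, rfl⟩, _, ⟨k, hk, rfl⟩, (map_mul _ _ _).symm⟩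
  · intro hQ
    ext g
    simp only [Set.mem_univ, iff_true]
    obtain ⟨x, ⟨h, hh, rfl⟩, y, ⟨k, hk, rfl⟩, hxy⟩ :=
      hQ.ge (Set.mem_univ (QuotientGroup.mk' L g))
    have hxy' : (QuotientGroup.mk' L) h * (QuotientGroup.mk' L) k = (QuotientGroup.mk' L) g := hxy
    have hl : (h * k)⁻¹ * g ∈ L := by
      rw [← QuotientGroup.eq]
      rw [← map_mul] at hxy'
      exact hxy'
    have hl2 : k * ((h * k)⁻¹ * g) * k⁻¹ ∈ L :=
      Subgroup.Normal.conj_mem ‹L.Normal› _ hl k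
    obtain ⟨h', hh', k', hk', hprod⟩ := hL hl2
    refine ⟨h * h', mul_mem hh hh', k' * k, mul_mem hk' hk, ?_⟩
    have : h * (k * ((h * k)⁻¹ * g) * k⁻¹) * k = g := by group
    have hprod' : h' * k' = k * ((h * k)⁻¹ * g) * k⁻¹ := hprod
    show (h * h') * (k' * k) = g
    rw [← this, ← hprod']
    group
end

section
/- Let G be a group, let L be a normal subgroup of G, and let H and K be subgroups of G with G = HK. Then the underlying set of the subgroup HL ∩ KL equals the pointwise product of the underlying sets of the subgroups H ∩ KL and K ∩ HL; here HL denotes the subgroup generated by H and L (which equals the product set of H and L since L is normal), and similarly for KL. -/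
open Pointwise

/-- Lemma 2.4: if `G = HK` then `HL ∩ KL = (H ∩ KL)(K ∩ HL)` for a normal
subgroup `L` of `G` (here `HL = H ⊔ L` and `KL = K ⊔ L`). -/
theorem stmt_4 {G : Type*} [Group G] (H K L : Subgroup G) [L.Normal]
    (h : (H : Set G) * (K : Set G) = Set.univ) :
    (((H ⊔ L) ⊓ (K ⊔ L) : Subgroup G) : Set G) =
      ((H ⊓ (K ⊔ L) : Subgroup G) : Set G) * ((K ⊓ (H ⊔ L) : Subgroup G) : Set G) := by
  ext g
  constructor
  · rintro ⟨hg1, hg2⟩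
    have hg1' : g ∈ (H : Set G) * (L : Set G) := by
      rw [← Subgroup.mul_normal]; exact hg1
    obtain ⟨a, ha, l, hl, rfl⟩ := hg1'
    have : l ∈ (H : Set G) * (K : Set G) := by rw [h]; trivial
    obtain ⟨b, hb, k, hk, rfl⟩ := this
    refine ⟨a * b, ⟨mul_mem ha hb, ?_⟩, k, ⟨hk, ?_⟩, by group⟩
    · have : a * b = a * (b * k) * k⁻¹ := by group
      rw [this]
      exact mul_mem hg2 ((K ⊔ L).inv_mem (Subgroup.mem_sup_left hk))
    · have : k = b⁻¹ * (b * k) := by group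
      rw [this]
      exact mul_mem ((H ⊔ L).inv_mem (Subgroup.mem_sup_left hb)) (Subgroup.mem_sup_right hl)
  · rintro ⟨a, ⟨haH, haKL⟩, b, ⟨hbK, hbHL⟩, rfl⟩
    exact ⟨mul_mem (Subgroup.mem_sup_left haH) hbHL,
      mul_mem haKL (Subgroup.mem_sup_left hbK)⟩
end

section
/- Let G be a group and let H and K be subgroups of G with G = HK. Then for all elements x and y of G: (i) G = H^x K^y, where H^x = x⁻¹Hx and K^y = y⁻¹Ky; and (ii) there exists an element g of G such that H^x ∩ K^y = (H ∩ K)^g; in particular the groups H^x ∩ K^y and H ∩ K are isomorphic. -/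
open Pointwise

private lemma conj_map_self {G : Type*} [Group G] (H : Subgroup G) {a : G} (ha : a ∈ H) :
    Subgroup.map (MulAut.conj a).toMonoidHom H = H := by
  ext z
  simp only [Subgroup.mem_map, MulEquiv.coe_toMonoidHom, MulAut.conj_apply]
  constructor
  · rintro ⟨m, hm, rfl⟩
    exact H.mul_mem (H.mul_mem ha hm) (H.inv_mem ha)
  · intro hz
    exact ⟨a⁻¹ * z * a, by
      exact H.mul_mem (H.mul_mem (H.inv_mem ha) hz) ha, by group⟩

/-- Lemma 2.5: if `G = HK` then for all `x, y ∈ G` we have `G = H^x K^y`,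
and `H^x ∩ K^y` is a conjugate of `H ∩ K` (in particular isomorphic to it). -/
theorem stmt_5 {G : Type*} [Group G] (H K : Subgroup G)
    (h : (H : Set G) * (K : Set G) = Set.univ) (x y : G) :
    ((Subgroup.map (MulAut.conj x⁻¹).toMonoidHom H : Set G) *
        (Subgroup.map (MulAut.conj y⁻¹).toMonoidHom K : Set G) = Set.univ) ∧
    (∃ g : G,
      Subgroup.map (MulAut.conj x⁻¹).toMonoidHom H ⊓
          Subgroup.map (MulAut.conj y⁻¹).toMonoidHom K =
        Subgroup.map (MulAut.conj g⁻¹).toMonoidHom (H ⊓ K)) ∧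
    Nonempty
      ((Subgroup.map (MulAut.conj x⁻¹).toMonoidHom H ⊓
          Subgroup.map (MulAut.conj y⁻¹).toMonoidHom K : Subgroup G) ≃*
        (H ⊓ K : Subgroup G)) := by
  have hmem : ∀ a : G, ∃ h₁ ∈ H, ∃ k₁ ∈ K, h₁ * k₁ = a := by
    intro a
    have : a ∈ (H : Set G) * (K : Set G) := h ▸ Set.mem_univ a
    simpa [Set.mem_mul] using this
  obtain ⟨h0, hh0, k0, hk0, hk0eq⟩ := hmem (x * y⁻¹)
  have hconj : ∀ (g : G), Subgroup.map (MulAut.conj g⁻¹).toMonoidHom =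
      Subgroup.map (MulAut.conj g⁻¹).toMonoidHom := fun _ => rfl
  -- key: H^x = H^g and K^y = K^g for g = h0⁻¹ * x = k0 * y
  have hxg : Subgroup.map (MulAut.conj (h0⁻¹ * x)⁻¹).toMonoidHom H
      = Subgroup.map (MulAut.conj x⁻¹).toMonoidHom H := by
    have h1 : (MulAut.conj (h0⁻¹ * x)⁻¹).toMonoidHom =
        ((MulAut.conj x⁻¹).toMonoidHom).comp (MulAut.conj h0).toMonoidHom := by
      ext z
      simp [MulAut.conj_apply, mul_assoc]
    rw [h1, ← Subgroup.map_map, conj_map_self H hh0]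
  have hx' : x = h0 * k0 * y := by rw [hk0eq]; group
  have hgy : h0⁻¹ * x = k0 * y := by rw [hx']; group
  have hyg : Subgroup.map (MulAut.conj (h0⁻¹ * x)⁻¹).toMonoidHom K
      = Subgroup.map (MulAut.conj y⁻¹).toMonoidHom K := by
    rw [hgy]
    have h1 : (MulAut.conj (k0 * y)⁻¹).toMonoidHom =
        ((MulAut.conj y⁻¹).toMonoidHom).comp (MulAut.conj k0⁻¹).toMonoidHom := by
      ext z
      simp [MulAut.conj_apply, mul_assoc]
    rw [h1, ← Subgroup.map_map, conj_map_self K (K.inv_mem hk0)]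
  have hinf : Subgroup.map (MulAut.conj x⁻¹).toMonoidHom H ⊓
      Subgroup.map (MulAut.conj y⁻¹).toMonoidHom K =
      Subgroup.map (MulAut.conj (h0⁻¹ * x)⁻¹).toMonoidHom (H ⊓ K) := by
    rw [Subgroup.map_inf _ _ _ (MulAut.conj (h0⁻¹ * x)⁻¹).injective, hxg, hyg]
  refine ⟨?_, ⟨h0⁻¹ * x, hinf⟩, ?_⟩
  · ext z
    simp only [Set.mem_univ, iff_true]
    obtain ⟨a, ha, b, hb, hab⟩ := hmem (x * z * y⁻¹)
    refine Set.mem_mul.mpr ⟨x⁻¹ * (a * h0⁻¹) * x, ?_, y⁻¹ * (k0⁻¹ * b) * y, ?_, ?_⟩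
    · exact ⟨a * h0⁻¹, H.mul_mem ha (H.inv_mem hh0), by simp [MulAut.conj_apply, mul_assoc]⟩
    · exact ⟨k0⁻¹ * b, K.mul_mem (K.inv_mem hk0) hb, by simp [MulAut.conj_apply, mul_assoc]⟩
    · have hx : x = h0 * k0 * y := by rw [hk0eq]; group
      have hz : z = x⁻¹ * (a * b) * y := by rw [hab]; group
      rw [hz, hx]; group
  · rw [hinf]
    exact ⟨(MulEquiv.subgroupMap (MulAut.conj (h0⁻¹ * x)⁻¹ : G ≃* G) (H ⊓ K)).symm⟩
end

section
/- Let F be a field of characteristic 2, let σ : F → F be a ring homomorphism with σ ∘ σ = id, let V be a vector space over F, and let β : V → V → F be a map which is F-linear in its first argument, additive and σ-semilinear in its second argument (β(u, c•v) = σ(c)·β(u,v)), and hermitian in the sense that β(v,u) = σ(β(u,v)) for all u, v. Let E, F₁ ∈ V with β(E, F₁) = 1, and let λ ∈ F with λ + σ(λ) = 1. Then there is no F-linear map t : V → V preserving β (that is, β(t u, t v) = β(u, v) for all u, v ∈ V) such that t(λ•E) = F₁ and t(F₁) = λ•E. -/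
/-- Key step in Lemma 4.3: no isometry of the hermitian form `β` swaps
`λ•E` and `F₁` when `β(E, F₁) = 1` and `λ + σ(λ) = 1` in characteristic 2. -/
theorem stmt_6 {F V : Type*} [Field F] [CharP F 2] [AddCommGroup V] [Module F V]
    (σ : F →+* F) (hσ : ∀ a, σ (σ a) = a)
    (β : V → V → F)
    (hadd₁ : ∀ u u' v, β (u + u') v = β u v + β u' v)
    (hsmul₁ : ∀ (c : F) (u v : V), β (c • u) v = c * β u v)
    (hadd₂ : ∀ u v v', β u (v + v') = β u v + β u v')
    (hsmul₂ : ∀ (c : F) (u v : V), β u (c • v) = σ c * β u v)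
    (hherm : ∀ u v, β v u = σ (β u v))
    (E F₁ : V) (hEF : β E F₁ = 1)
    (lam : F) (hlam : lam + σ lam = 1) :
    ¬ ∃ t : V →ₗ[F] V,
      (∀ u v, β (t u) (t v) = β u v) ∧ t (lam • E) = F₁ ∧ t F₁ = lam • E := by
  rintro ⟨t, hiso, h1, h2⟩
  have key := hiso (lam • E) F₁
  rw [h1, h2, hsmul₂, hherm, hEF, map_one, mul_one, hsmul₁, hEF, mul_one] at key
  have : lam + lam = 1 := by rw [← hlam, key]
  have h0 : (2 : F) = 0 := by exact_mod_cast CharP.cast_eq_zero F 2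
  rw [← two_mul, h0, zero_mul] at this
  exact zero_ne_one this
end
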